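/- arXiv:1011.1936 — 6 statements merged into one kernel-verified Lean document; each statement's English description precedes it below -/
import Mathlib

section
/- For a closed convex cone C in a real Hilbert space, the Euclidean distance from a point x to C equals the maximum over all θ in the polar cone C° with ‖θ‖ ≤ 1 of the inner product ⟨θ, x⟩. -/
/-!
Let `p` be the nearest point of `C` to `x`. Testing the variational inequality
`⟪x - p, w - p⟫ ≤ 0` at `w = 0` and `w = 2p` shows `x - p ⟂ p`, and then `x - p` lies in the polar
cone. Hence the unit vector along `x - p` is admissible and its inner product with `x` is
`‖x - p‖ = dist(x, C)`. Conversely, for admissible `θ` and `y ∈ C`,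
`⟪θ, x⟫ ≤ ⟪θ, x - y⟫ ≤ ‖x - y‖`.
-/

open scoped RealInnerProductSpace

section

variable {H : Type*} [NormedAddCommGroup H] [InnerProductSpace ℝ H]

theorem real_inner_le_infDist_of_forall_inner_nonpos {C : Set H} (hC : C.Nonempty) {θ : H}
    (hθC : ∀ y ∈ C, ⟪θ, y⟫ ≤ 0) (hθ : ‖θ‖ ≤ 1) (x : H) :
    ⟪θ, x⟫ ≤ Metric.infDist x C := by
  refine (Metric.le_infDist hC).2 fun y hy => ?_
  calc ⟪θ, x⟫ ≤ ⟪θ, x⟫ - ⟪θ, y⟫ := by linarith [hθC y hy]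
    _ = ⟪θ, x - y⟫ := (inner_sub_right θ x y).symm
    _ ≤ ‖θ‖ * ‖x - y‖ := real_inner_le_norm θ (x - y)
    _ ≤ ‖x - y‖ := mul_le_of_le_one_left (norm_nonneg _) hθ
    _ = dist x y := (dist_eq_norm x y).symm

section Cone

variable {C : Set H} (hcone : ∀ x ∈ C, ∀ a : ℝ, 0 ≤ a → a • x ∈ C) {p z : H} (hp : p ∈ C)
  (hz : ∀ w ∈ C, ⟪z, w - p⟫ ≤ 0)
include hcone hp hz

theorem real_inner_eq_zero_of_forall_inner_sub_nonpos : ⟪z, p⟫ = 0 := by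
  have h_zero := hz _ (hcone p hp 0 le_rfl)
  have h_two := hz _ (hcone p hp 2 zero_le_two)
  rw [zero_smul, zero_sub, inner_neg_right] at h_zero
  rw [two_smul, add_sub_cancel_right] at h_two
  linarith

theorem real_inner_nonpos_of_forall_inner_sub_nonpos : ∀ y ∈ C, ⟪z, y⟫ ≤ 0 := fun y hy => by
  simpa [inner_sub_right, real_inner_eq_zero_of_forall_inner_sub_nonpos hcone hp hz] using hz y hy

end Cone

theorem real_inner_inv_norm_smul_self (z : H) : ⟪‖z‖⁻¹ • z, z⟫ = ‖z‖ := by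
  rcases eq_or_ne z 0 with rfl | hz
  · simp
  · rw [real_inner_smul_left, real_inner_self_eq_norm_sq]
    field_simp [norm_ne_zero_iff.2 hz]

theorem norm_inv_norm_smul_le_one (z : H) : ‖‖z‖⁻¹ • z‖ ≤ 1 := by
  rcases eq_or_ne z 0 with rfl | hz
  · simp
  · exact (norm_smul_inv_norm hz).le

theorem exists_forall_inner_nonpos_inner_eq_infDist [CompleteSpace H] {C : Set H}
    (hCne : C.Nonempty) (hCcl : IsClosed C) (hCconv : Convex ℝ C)
    (hcone : ∀ x ∈ C, ∀ a : ℝ, 0 ≤ a → a • x ∈ C) (x : H) :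
    ∃ θ : H, (∀ y ∈ C, ⟪θ, y⟫ ≤ 0) ∧ ‖θ‖ ≤ 1 ∧ Metric.infDist x C = ⟪θ, x⟫ := by
  obtain ⟨p, hp, hmin⟩ := exists_norm_eq_iInf_of_complete_convex hCne hCcl.isComplete hCconv x
  have hvar := (norm_eq_iInf_iff_real_inner_le_zero hCconv hp).1 hmin
  have horth := real_inner_eq_zero_of_forall_inner_sub_nonpos hcone hp hvar
  have hdist : Metric.infDist x C = ‖x - p‖ := by
    simp only [Metric.infDist_eq_iInf, dist_eq_norm, hmin]
  refine ⟨‖x - p‖⁻¹ • (x - p), fun y hy => ?_, norm_inv_norm_smul_le_one _, ?_⟩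
  · rw [real_inner_smul_left]
    exact mul_nonpos_of_nonneg_of_nonpos (by positivity)
      (real_inner_nonpos_of_forall_inner_sub_nonpos hcone hp hvar y hy)
  · calc Metric.infDist x C = ⟪‖x - p‖⁻¹ • (x - p), x - p⟫ := by
          rw [hdist, real_inner_inv_norm_smul_self]
      _ = ⟪‖x - p‖⁻¹ • (x - p), x⟫ := by
          simp only [inner_sub_right, real_inner_smul_left, horth, mul_zero, sub_zero]

end

theorem dist_to_cone_dual
    {H : Type*} [NormedAddCommGroup H] [InnerProductSpace ℝ H] [CompleteSpace H]
    (C : Set H) (hCne : C.Nonempty) (hCcl : IsClosed C) (hCconv : Convex ℝ C)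
    (hCcone : ∀ x ∈ C, ∀ a : ℝ, 0 ≤ a → a • x ∈ C)
    (x : H) :
    IsGreatest {r : ℝ | ∃ θ : H, (∀ y ∈ C, (inner ℝ θ y : ℝ) ≤ 0) ∧ ‖θ‖ ≤ 1 ∧
        r = (inner ℝ θ x : ℝ)}
      (Metric.infDist x C) := by
  refine ⟨exists_forall_inner_nonpos_inner_eq_infDist hCne hCcl hCconv hCcone x, ?_⟩
  rintro r ⟨θ, hθC, hθ, rfl⟩
  exact real_inner_le_infDist_of_forall_inner_nonpos hCne hθC hθ x
end

section
/- Let K be a nonempty closed convex bounded subset of a Hilbert space H, let ‖K‖ = sup_{y ∈ K} ‖y‖, and let C = cone({1} ⊕ K) ⊆ ℝ ⊕ H be the cone generated by the lifting of K. Then for every x ∈ H: dist(1 ⊕ x, C) ≤ dist(x, K) ≤ (1 + ‖K‖) · dist(1 ⊕ x, C). -/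
/-!
The map `x ↦ 1 ⊕ x` is an isometry onto the slice `{1} ⊕ K` of the cone, which gives the first
inequality. For the second, a point `a • (1 ⊕ k)` of the cone is at distance at least `|1 - a|`
and at least `‖x - a • k‖` from `1 ⊕ x`, while `‖x - k‖ ≤ ‖x - a • k‖ + |1 - a| ‖k‖`
and `‖k‖ ≤ ‖K‖`.
-/

open Metric

/-- The cone `cone({1} ⊕ K)` in the `L^p` product `ℝ ⊕ E`. -/
def liftingCone (p : ENNReal) {E : Type*} [SeminormedAddCommGroup E] [NormedSpace ℝ E]
    (K : Set E) : Set (WithLp p (ℝ × E)) :=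
  {z | ∃ a : ℝ, 0 ≤ a ∧ ∃ k ∈ K, z = a • WithLp.toLp p ((1 : ℝ), k)}

lemma isometry_toLp_two_mk {α β : Type*} [SeminormedAddCommGroup α] [SeminormedAddCommGroup β]
    (c : α) :
    Isometry fun y : β => WithLp.toLp 2 (c, y) :=
  Isometry.of_dist_eq fun y y' => by
    rw [WithLp.prod_dist_eq_of_L2]
    simp [Real.sqrt_sq dist_nonneg]

lemma norm_le_sSup_image_norm {E : Type*} [SeminormedAddCommGroup E] {K : Set E}
    (hK : Bornology.IsBounded K) {k : E} (hk : k ∈ K) : ‖k‖ ≤ sSup (norm '' K) := by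
  obtain ⟨R, hR⟩ := hK.exists_norm_le
  exact le_csSup ⟨R, by rintro _ ⟨y, hy, rfl⟩; exact hR y hy⟩ ⟨k, hk, rfl⟩

section LiftingCone

variable {E : Type*} [SeminormedAddCommGroup E] [NormedSpace ℝ E]

lemma infDist_toLp_one_liftingCone_le (K : Set E) (hK : K.Nonempty) (x : E) :
    infDist (WithLp.toLp 2 ((1 : ℝ), x)) (liftingCone 2 K) ≤ infDist x K := by
  have hslice : (fun y => WithLp.toLp 2 ((1 : ℝ), y)) '' K ⊆ liftingCone 2 K := by
    rintro _ ⟨k, hk, rfl⟩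
    exact ⟨1, zero_le_one, k, hk, (one_smul ℝ _).symm⟩
  calc infDist (WithLp.toLp 2 ((1 : ℝ), x)) (liftingCone 2 K)
      ≤ infDist (WithLp.toLp 2 ((1 : ℝ), x)) ((fun y => WithLp.toLp 2 ((1 : ℝ), y)) '' K) :=
        infDist_le_infDist_of_subset hslice (hK.image _)
    _ = infDist x K := infDist_image (isometry_toLp_two_mk 1)

variable {p : ENNReal} [Fact (1 ≤ p)]

lemma dist_le_one_add_mul_dist_smul_toLp {x k : E} {M : ℝ} (hk : ‖k‖ ≤ M) (a : ℝ) :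
    dist x k ≤
      (1 + M) * dist (WithLp.toLp p ((1 : ℝ), x)) (a • WithLp.toLp p ((1 : ℝ), k)) := by
  rw [← WithLp.toLp_smul, Prod.smul_mk, smul_eq_mul, mul_one]
  set u := WithLp.toLp p ((1 : ℝ), x)
  set v := WithLp.toLp p (a, a • k)
  have hfst : |1 - a| ≤ dist u v := by simpa [u, v, Real.dist_eq] using WithLp.dist_fst_le u v
  have hsnd : ‖x - a • k‖ ≤ dist u v := by
    simpa [u, v, dist_eq_norm] using WithLp.dist_snd_le u v
  calc dist x k = ‖(x - a • k) + (a - 1) • k‖ := by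
        rw [dist_eq_norm]; congr 1; module
    _ ≤ ‖x - a • k‖ + |1 - a| * ‖k‖ := by
        grw [norm_add_le, norm_smul, Real.norm_eq_abs, abs_sub_comm]
    _ ≤ dist u v + dist u v * M := by gcongr
    _ = (1 + M) * dist u v := by ring

lemma infDist_le_one_add_mul_infDist_liftingCone {K : Set E} (hK : K.Nonempty) {M : ℝ}
    (hM : ∀ k ∈ K, ‖k‖ ≤ M) (x : E) :
    infDist x K ≤ (1 + M) * infDist (WithLp.toLp p ((1 : ℝ), x)) (liftingCone p K) := by
  obtain ⟨k₀, hk₀⟩ := hK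
  have hM₁ : 0 < 1 + M := by linarith [norm_nonneg k₀, hM k₀ hk₀]
  have hcone : (liftingCone p K).Nonempty := ⟨_, 1, zero_le_one, k₀, hk₀, rfl⟩
  rw [← div_le_iff₀' hM₁, le_infDist hcone]
  rintro _ ⟨a, -, k, hk, rfl⟩
  rw [div_le_iff₀' hM₁]
  exact (infDist_le_dist_of_mem hk).trans (dist_le_one_add_mul_dist_smul_toLp (hM k hk) a)

end LiftingCone

theorem dist_lifting_cone_general
    {H : Type*} [NormedAddCommGroup H] [InnerProductSpace ℝ H]
    (K : Set H) (hKne : K.Nonempty)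
    (hKbd : Bornology.IsBounded K)
    (M : ℝ) (hM : M = sSup ((fun y => ‖y‖) '' K))
    (C : Set (WithLp 2 (ℝ × H)))
    (hC : C = {z | ∃ a : ℝ, 0 ≤ a ∧ ∃ k ∈ K,
        z = a • (WithLp.equiv 2 (ℝ × H)).symm (1, k)})
    (x : H) :
    Metric.infDist ((WithLp.equiv 2 (ℝ × H)).symm (1, x)) C ≤ Metric.infDist x K ∧
    Metric.infDist x K ≤
      (1 + M) * Metric.infDist ((WithLp.equiv 2 (ℝ × H)).symm (1, x)) C := by
  have hC' : C = liftingCone 2 K := hC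
  subst hC' hM
  exact ⟨infDist_toLp_one_liftingCone_le K hKne x,
    infDist_le_one_add_mul_infDist_liftingCone hKne
      (fun _ hk => norm_le_sSup_image_norm hKbd hk) x⟩

theorem dist_lifting_cone
    {H : Type*} [NormedAddCommGroup H] [InnerProductSpace ℝ H] [CompleteSpace H]
    (K : Set H) (hKne : K.Nonempty) (hKcl : IsClosed K) (hKconv : Convex ℝ K)
    (hKbd : Bornology.IsBounded K)
    (M : ℝ) (hM : M = sSup ((fun y => ‖y‖) '' K))
    (C : Set (WithLp 2 (ℝ × H)))
    (hC : C = {z | ∃ a : ℝ, 0 ≤ a ∧ ∃ k ∈ K,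
        z = a • (WithLp.equiv 2 (ℝ × H)).symm (1, k)})
    (x : H) :
    Metric.infDist ((WithLp.equiv 2 (ℝ × H)).symm (1, x)) C ≤ Metric.infDist x K ∧
    Metric.infDist x K ≤
      (1 + M) * Metric.infDist ((WithLp.equiv 2 (ℝ × H)).symm (1, x)) C :=
  dist_lifting_cone_general K hKne hKbd M hM C hC x
end

section
/- Let ℓ : X × Y → ℝ^d be biaffine with X ⊆ ℝ^n, Y ⊆ ℝ^m convex and compact, and let S ⊆ ℝ^d be a closed convex set. If S is response-satisfiable (for every y ∈ Y there exists x_y ∈ X with ℓ(x_y, y) ∈ S), then S is halfspace-satisfiable (for every closed halfspace H ⊇ S there exists x* ∈ X with ℓ(x*, y) ∈ H for all y ∈ Y). -/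
/-!
Put `f x y = θ ⬝ᵥ ℓ x y`. Response satisfiability says that every `y` admits some `x` with
`f x y ≤ c`; we need a single `x` that works for all `y`, a minimax statement for `f`, which is
affine in `x` and concave in `y`. An affine function on a convex subset of `ℝⁿ` extends to an
affine map of `ℝⁿ`, so each `f · y` is continuous on the compact set `X`, and it suffices to treat
finitely many `y₁, …, yₖ`. If no `x` had `f x yⱼ ≤ c` for all `j`, the compact convex set
`{(f x yⱼ)ⱼ | x ∈ X}` would miss the orthant `{v | v ≤ c}`; a separating functional gives weights
`μ ≥ 0` with `∑ μⱼ f x yⱼ > c ∑ μⱼ` for every `x ∈ X`, and at the `μ`-barycenter `ȳ` of the `yⱼ`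
concavity gives `f x ȳ > c` for every `x ∈ X`, contradicting response satisfiability.
-/

open Finset

theorem LinearMap.exists_comp_eq_of_ker_le {K V W U : Type*} [Field K] [AddCommGroup V]
    [Module K V] [AddCommGroup W] [Module K W] [AddCommGroup U] [Module K U]
    (f : V →ₗ[K] W) (g : V →ₗ[K] U) (h : ker f ≤ ker g) : ∃ L : W →ₗ[K] U, L ∘ₗ f = g := by
  obtain ⟨R, hR⟩ := ((ker f).liftQ f le_rfl).exists_leftInverse_of_injective
    (Submodule.ker_liftQ_eq_bot _ _ _ le_rfl)
  refine ⟨(ker f).liftQ g h ∘ₗ R, LinearMap.ext fun v => ?_⟩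
  have hRv := LinearMap.congr_fun hR (Submodule.Quotient.mk v)
  simp only [LinearMap.coe_comp, Function.comp_apply, Submodule.liftQ_apply,
    LinearMap.id_apply] at hRv ⊢
  rw [hRv, Submodule.liftQ_apply]

section ConvexConcaveOn

variable {E ι : Type*} [AddCommGroup E] [Module ℝ E] {s : Set E} {g : E → ℝ}

theorem ConvexOn.sum_mul_eq_mul_map_centerMass (hcv : ConvexOn ℝ s g) (hcc : ConcaveOn ℝ s g)
    {t : Finset ι} {w : ι → ℝ} {p : ι → E} (hw : ∀ i ∈ t, 0 ≤ w i) (hp : ∀ i ∈ t, p i ∈ s) :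
    ∑ i ∈ t, w i * g (p i) = (∑ i ∈ t, w i) * g (t.centerMass w p) := by
  rcases (sum_nonneg hw).eq_or_lt with hW | hW
  · have hw0 : ∀ i ∈ t, w i = 0 := (sum_eq_zero_iff_of_nonneg hw).1 hW.symm
    rw [← hW, zero_mul]
    exact sum_eq_zero fun i hi => by rw [hw0 i hi, zero_mul]
  · rw [le_antisymm (hcv.map_centerMass_le hw hW hp) (hcc.le_map_centerMass hw hW hp),
      centerMass, smul_eq_mul, mul_inv_cancel_left₀ hW.ne']
    rfl

theorem ConvexOn.sum_mul_eq_zero_of_concaveOn (hcv : ConvexOn ℝ s g) (hcc : ConcaveOn ℝ s g)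
    {t : Finset ι} {a : ι → ℝ} {p : ι → E} (hp : ∀ i ∈ t, p i ∈ s)
    (ha : ∑ i ∈ t, a i = 0) (hap : ∑ i ∈ t, a i • p i = 0) :
    ∑ i ∈ t, a i * g (p i) = 0 := by
  have hW : ∑ i ∈ t, (a i)⁺ = ∑ i ∈ t, (a i)⁻ := by
    rw [← sub_eq_zero, ← sum_sub_distrib]
    simpa only [posPart_sub_negPart] using ha
  have hcm : t.centerMass (fun i => (a i)⁺) p = t.centerMass (fun i => (a i)⁻) p := by
    have hsum : ∑ i ∈ t, (a i)⁺ • p i = ∑ i ∈ t, (a i)⁻ • p i := by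
      rw [← sub_eq_zero, ← sum_sub_distrib]
      simpa only [← sub_smul, posPart_sub_negPart] using hap
    rw [centerMass, centerMass, hW, hsum]
  have hpos := hcv.sum_mul_eq_mul_map_centerMass hcc (fun i _ => posPart_nonneg (a i)) hp
  have hneg := hcv.sum_mul_eq_mul_map_centerMass hcc (fun i _ => negPart_nonneg (a i)) hp
  calc ∑ i ∈ t, a i * g (p i)
      = ∑ i ∈ t, (a i)⁺ * g (p i) - ∑ i ∈ t, (a i)⁻ * g (p i) := by
        simp only [← sum_sub_distrib, ← sub_mul, posPart_sub_negPart]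
    _ = 0 := by rw [hpos, hneg, hW, hcm, sub_self]

theorem ConvexOn.exists_affineMap_eqOn_of_concaveOn (hcv : ConvexOn ℝ s g)
    (hcc : ConcaveOn ℝ s g) : ∃ F : E →ᵃ[ℝ] ℝ, Set.EqOn F g s := by
  -- `g` extends linearly from the points `(x, 1)`, `x ∈ s`, as it respects their linear relations
  let P : (s →₀ ℝ) →ₗ[ℝ] E × ℝ := Finsupp.linearCombination ℝ fun x => ((x : E), (1 : ℝ))
  let Q : (s →₀ ℝ) →ₗ[ℝ] ℝ := Finsupp.linearCombination ℝ fun x => g x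
  obtain ⟨L, hL⟩ : ∃ L : E × ℝ →ₗ[ℝ] ℝ, L ∘ₗ P = Q := by
    refine P.exists_comp_eq_of_ker_le Q fun a ha => ?_
    have hPa : ∑ x ∈ a.support, a x • ((x : E), (1 : ℝ)) = 0 := ha
    have h1 := congrArg Prod.fst hPa
    have h2 := congrArg Prod.snd hPa
    simp only [Prod.fst_sum, Prod.snd_sum, Prod.smul_mk, smul_eq_mul, mul_one, Prod.fst_zero,
      Prod.snd_zero] at h1 h2
    exact hcv.sum_mul_eq_zero_of_concaveOn hcc (fun x _ => x.2) h2 h1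
  refine ⟨(L ∘ₗ LinearMap.inl ℝ E ℝ).toAffineMap + AffineMap.const ℝ E (L (0, 1)),
    fun x hx => ?_⟩
  have hLx := LinearMap.congr_fun hL (Finsupp.single ⟨x, hx⟩ 1)
  simp only [LinearMap.coe_comp, Function.comp_apply, Finsupp.linearCombination_single, one_smul,
    smul_eq_mul, one_mul, P, Q] at hLx
  simp [← map_add, hLx]

end ConvexConcaveOn

theorem ConvexOn.continuousOn_of_concaveOn {E : Type*} [NormedAddCommGroup E] [NormedSpace ℝ E]
    [FiniteDimensional ℝ E] {s : Set E} {g : E → ℝ} (hcv : ConvexOn ℝ s g)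
    (hcc : ConcaveOn ℝ s g) : ContinuousOn g s := by
  obtain ⟨F, hF⟩ := hcv.exists_affineMap_eqOn_of_concaveOn hcc
  exact F.continuous_of_finiteDimensional.continuousOn.congr hF.symm

theorem exists_nonneg_lt_sum_mul_of_forall_exists_lt {ι : Type*} [Fintype ι] {K : Set (ι → ℝ)}
    (hKconv : Convex ℝ K) (hK : IsCompact K) {c : ℝ} (hKc : ∀ k ∈ K, ∃ j, c < k j) :
    ∃ μ : ι → ℝ, (∀ j, 0 ≤ μ j) ∧ ∀ k ∈ K, c * ∑ j, μ j < ∑ j, μ j * k j := by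
  classical
  have hdisj : Disjoint K (Set.Iic fun _ => c) := Set.disjoint_left.2 fun k hk hkc =>
    let ⟨j, hj⟩ := hKc k hk; (hkc j).not_gt hj
  obtain ⟨φ, u, v, hφK, huv, hφD⟩ :=
    geometric_hahn_banach_compact_closed hKconv hK (convex_Iic _) isClosed_Iic hdisj
  have hφc : v < φ fun _ => c := hφD _ (Set.mem_Iic.2 le_rfl)
  have hφ : ∀ z, φ z = ∑ j, φ (Pi.single j 1) * z j := fun z => by
    conv_lhs => rw [← univ_sum_single z]
    refine (map_sum φ _ _).trans (sum_congr rfl fun j _ => ?_)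
    rw [mul_comm, ← smul_eq_mul, ← map_smul, ← Pi.single_smul', smul_eq_mul, mul_one]
  -- `φ` is bounded below on the orthant `Iic c`, so it is nonincreasing along every axis
  have hφ_single : ∀ j, φ (Pi.single j 1) ≤ 0 := by
    intro j
    by_contra! hj
    have hmem : (fun _ => c) - (((φ fun _ => c) - v) / φ (Pi.single j 1)) • Pi.single j 1 ∈
        Set.Iic fun _ : ι => c :=
      Set.mem_Iic.2 <| sub_le_self _ <|
        smul_nonneg (div_nonneg (sub_nonneg.2 hφc.le) hj.le) (Pi.single_nonneg.2 zero_le_one)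
    have := hφD _ hmem
    rw [map_sub, map_smul, smul_eq_mul, div_mul_cancel₀ _ hj.ne'] at this
    linarith
  refine ⟨fun j => -φ (Pi.single j 1), fun j => neg_nonneg.2 (hφ_single j), fun k hk => ?_⟩
  have h1 := hφK k hk
  rw [hφ] at h1 hφc
  simp only [neg_mul, sum_neg_distrib, mul_comm c, ← sum_mul] at hφc ⊢
  linarith

section Minimax

variable {E F : Type*} [TopologicalSpace E] [AddCommGroup E] [Module ℝ E] [AddCommGroup F]
  [Module ℝ F] {X : Set E} {Y : Set F} {f : E → F → ℝ} {c : ℝ}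

theorem exists_forall_le_of_forall_exists_le_of_fintype (hX : IsCompact X) (hXne : X.Nonempty)
    (hcont : ∀ y ∈ Y, ContinuousOn (f · y) X) (hcvx : ∀ y ∈ Y, ConvexOn ℝ X (f · y))
    (hccx : ∀ y ∈ Y, ConcaveOn ℝ X (f · y)) (hY : Convex ℝ Y)
    (hccy : ∀ x ∈ X, ConcaveOn ℝ Y (f x)) (h : ∀ y ∈ Y, ∃ x ∈ X, f x y ≤ c)
    {ι : Type*} [Fintype ι] (y : ι → F) (hy : ∀ j, y j ∈ Y) :
    ∃ x ∈ X, ∀ j, f x (y j) ≤ c := by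
  by_contra! hgt
  obtain ⟨x₀, hx₀⟩ := hXne
  obtain ⟨j₀, -⟩ := hgt x₀ hx₀
  have hXconv : Convex ℝ X := (hcvx _ (hy j₀)).1
  let Φ : E → ι → ℝ := fun x j => f x (y j)
  have hKconv : Convex ℝ (Φ '' X) := by
    rintro _ ⟨x₁, hx₁, rfl⟩ _ ⟨x₂, hx₂, rfl⟩ a b ha hb hab
    refine ⟨a • x₁ + b • x₂, hXconv hx₁ hx₂ ha hb hab, funext fun j => ?_⟩
    exact le_antisymm ((hcvx _ (hy j)).2 hx₁ hx₂ ha hb hab) ((hccx _ (hy j)).2 hx₁ hx₂ ha hb hab)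
  have hK : IsCompact (Φ '' X) :=
    hX.image_of_continuousOn (continuousOn_pi.2 fun j => hcont _ (hy j))
  obtain ⟨μ, hμ, hμK⟩ := exists_nonneg_lt_sum_mul_of_forall_exists_lt hKconv hK
    (Set.forall_mem_image.2 hgt)
  have hμpos : 0 < ∑ j, μ j := by
    refine (sum_nonneg fun j _ => hμ j).lt_of_ne fun hμ0 => ?_
    have hμ0' := (sum_eq_zero_iff_of_nonneg fun j _ => hμ j).1 hμ0.symm
    simpa [hμ0', ← hμ0] using hμK _ ⟨x₀, hx₀, rfl⟩
  obtain ⟨x, hx, hxc⟩ := h _ (hY.centerMass_mem (fun j _ => hμ j) hμpos fun j _ => hy j)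
  have hJensen := (hccy x hx).le_map_centerMass (fun j _ => hμ j) hμpos fun j _ => hy j
  have hcm : c < univ.centerMass μ (f x ∘ y) := by
    rw [centerMass, smul_eq_mul, lt_inv_mul_iff₀' hμpos]
    exact hμK _ ⟨x, hx, rfl⟩
  linarith

theorem exists_forall_le_of_forall_exists_le (hX : IsCompact X) (hXne : X.Nonempty)
    (hcont : ∀ y ∈ Y, ContinuousOn (f · y) X) (hcvx : ∀ y ∈ Y, ConvexOn ℝ X (f · y))
    (hccx : ∀ y ∈ Y, ConcaveOn ℝ X (f · y)) (hY : Convex ℝ Y)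
    (hccy : ∀ x ∈ X, ConcaveOn ℝ Y (f x)) (h : ∀ y ∈ Y, ∃ x ∈ X, f x y ≤ c) :
    ∃ x ∈ X, ∀ y ∈ Y, f x y ≤ c := by
  have hZ (y : Y) : ∃ Z, IsClosed Z ∧ (f · y) ⁻¹' Set.Iic c ∩ X = Z ∩ X :=
    continuousOn_iff_isClosed.1 (hcont y y.2) _ isClosed_Iic
  choose Z hZ hZX using hZ
  have hle_iff (y : Y) {x : E} (hx : x ∈ X) : f x y ≤ c ↔ x ∈ Z y := by
    simpa [hx] using Set.ext_iff.1 (hZX y) x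
  obtain ⟨x, hx, hxZ⟩ := hX.inter_iInter_nonempty Z hZ fun u => by
    obtain ⟨x, hx, hxu⟩ := exists_forall_le_of_forall_exists_le_of_fintype hX hXne hcont hcvx
      hccx hY hccy h (fun j : u => (j : F)) fun j => (j : Y).2
    refine ⟨x, hx, Set.mem_iInter₂.2 fun y hy => ?_⟩
    exact (hle_iff y hx).1 (hxu ⟨y, hy⟩)
  exact ⟨x, hx, fun y hy => (hle_iff ⟨y, hy⟩ hx).2 (Set.mem_iInter.1 hxZ ⟨y, hy⟩)⟩

end Minimax

theorem convexOn_concaveOn_dotProduct_comp {E ι : Type*} [AddCommGroup E] [Module ℝ E]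
    [Fintype ι] {s : Set E} (hs : Convex ℝ s) {φ : E → ι → ℝ}
    (hφ : ∀ a b : ℝ, 0 ≤ a → 0 ≤ b → a + b = 1 → ∀ x₁ ∈ s, ∀ x₂ ∈ s,
      φ (a • x₁ + b • x₂) = a • φ x₁ + b • φ x₂) (θ : ι → ℝ) :
    ConvexOn ℝ s (fun x => θ ⬝ᵥ φ x) ∧ ConcaveOn ℝ s (fun x => θ ⬝ᵥ φ x) := by
  have hθφ : ∀ ⦃x₁⦄, x₁ ∈ s → ∀ ⦃x₂⦄, x₂ ∈ s → ∀ ⦃a b : ℝ⦄, 0 ≤ a → 0 ≤ b → a + b = 1 →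
      θ ⬝ᵥ φ (a • x₁ + b • x₂) = a * θ ⬝ᵥ φ x₁ + b * θ ⬝ᵥ φ x₂ :=
    fun x₁ hx₁ x₂ hx₂ a b ha hb hab => by
      rw [hφ a b ha hb hab x₁ hx₁ x₂ hx₂, dotProduct_add, dotProduct_smul, dotProduct_smul,
        smul_eq_mul, smul_eq_mul]
  exact ⟨⟨hs, fun x₁ hx₁ x₂ hx₂ a b ha hb hab => (hθφ hx₁ hx₂ ha hb hab).le⟩,
    ⟨hs, fun x₁ hx₁ x₂ hx₂ a b ha hb hab => (hθφ hx₁ hx₂ ha hb hab).ge⟩⟩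

theorem response_satisfiable_implies_halfspace_satisfiable_general
    (n m d : ℕ) (X : Set (Fin n → ℝ)) (Y : Set (Fin m → ℝ))
    (hXc : Convex ℝ X) (hXcp : IsCompact X) (hXne : X.Nonempty)
    (hYc : Convex ℝ Y)
    (ℓ : (Fin n → ℝ) → (Fin m → ℝ) → (Fin d → ℝ))
    (hbi1 : ∀ a b : ℝ, 0 ≤ a → 0 ≤ b → a + b = 1 →
      ∀ x₁ ∈ X, ∀ x₂ ∈ X, ∀ y ∈ Y,
        ℓ (a • x₁ + b • x₂) y = a • ℓ x₁ y + b • ℓ x₂ y)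
    (hbi2 : ∀ a b : ℝ, 0 ≤ a → 0 ≤ b → a + b = 1 →
      ∀ x ∈ X, ∀ y₁ ∈ Y, ∀ y₂ ∈ Y,
        ℓ x (a • y₁ + b • y₂) = a • ℓ x y₁ + b • ℓ x y₂)
    (S : Set (Fin d → ℝ))
    (hresp : ∀ y ∈ Y, ∃ x ∈ X, ℓ x y ∈ S) :
    ∀ (θ : Fin d → ℝ) (c : ℝ), S ⊆ {z | ∑ i, θ i * z i ≤ c} →
      ∃ x ∈ X, ∀ y ∈ Y, ∑ i, θ i * ℓ x y i ≤ c := by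
  intro θ c hSH
  have hfx (y) (hy : y ∈ Y) := convexOn_concaveOn_dotProduct_comp (φ := (ℓ · y)) hXc
    (fun a b ha hb hab x₁ hx₁ x₂ hx₂ => hbi1 a b ha hb hab x₁ hx₁ x₂ hx₂ y hy) θ
  have hfy (x) (hx : x ∈ X) := (convexOn_concaveOn_dotProduct_comp (φ := ℓ x) hYc
    (fun a b ha hb hab => hbi2 a b ha hb hab x hx) θ).2
  exact exists_forall_le_of_forall_exists_le hXcp hXne
    (fun y hy => (hfx y hy).1.continuousOn_of_concaveOn (hfx y hy).2)
    (fun y hy => (hfx y hy).1) (fun y hy => (hfx y hy).2) hYc hfy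
    fun y hy => (hresp y hy).imp fun x ⟨hxX, hxS⟩ => ⟨hxX, hSH hxS⟩

theorem response_satisfiable_implies_halfspace_satisfiable
    (n m d : ℕ) (X : Set (Fin n → ℝ)) (Y : Set (Fin m → ℝ))
    (hXc : Convex ℝ X) (hXcp : IsCompact X) (hXne : X.Nonempty)
    (hYc : Convex ℝ Y) (hYcp : IsCompact Y) (hYne : Y.Nonempty)
    (ℓ : (Fin n → ℝ) → (Fin m → ℝ) → (Fin d → ℝ))
    (hbi1 : ∀ a b : ℝ, 0 ≤ a → 0 ≤ b → a + b = 1 →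
      ∀ x₁ ∈ X, ∀ x₂ ∈ X, ∀ y ∈ Y,
        ℓ (a • x₁ + b • x₂) y = a • ℓ x₁ y + b • ℓ x₂ y)
    (hbi2 : ∀ a b : ℝ, 0 ≤ a → 0 ≤ b → a + b = 1 →
      ∀ x ∈ X, ∀ y₁ ∈ Y, ∀ y₂ ∈ Y,
        ℓ x (a • y₁ + b • y₂) = a • ℓ x y₁ + b • ℓ x y₂)
    (S : Set (Fin d → ℝ)) (hScl : IsClosed S) (hSconv : Convex ℝ S)
    (hresp : ∀ y ∈ Y, ∃ x ∈ X, ℓ x y ∈ S) :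
    ∀ (θ : Fin d → ℝ) (c : ℝ), S ⊆ {z | ∑ i, θ i * z i ≤ c} →
      ∃ x ∈ X, ∀ y ∈ Y, ∑ i, θ i * ℓ x y i ≤ c :=
  response_satisfiable_implies_halfspace_satisfiable_general n m d X Y hXc hXcp hXne hYc ℓ hbi1 hbi2
    S hresp
end

section
/- Let ℓ : X × Y → ℝ^d be biaffine with X ⊆ ℝ^n, Y ⊆ ℝ^m convex and compact, and S ⊆ ℝ^d a closed convex set. If S is halfspace-satisfiable, then S is response-satisfiable. -/
/-!
Fix `y₀ ∈ Y`. The map `x ↦ ℓ x y₀` preserves convex combinations on `X`, so its graph over `X`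
is convex, and the span of the differences of graph points consists of nonnegative multiples of
single differences. That span therefore meets `{0} × ℝᵈ` only in `0`, i.e. it is the graph of a
linear map, and `x ↦ ℓ x y₀` agrees on `X` with an affine map. Hence its image of `X` is convex
and compact; if it missed `S`, a hyperplane would strictly separate the two, and the halfspace it
bounds around `S` would contain no `ℓ x y₀`, against halfspace-satisfiability.
-/

open Set Submodule
open scoped Pointwise

section Cone

variable {𝕜 V : Type*} [Field 𝕜] [LinearOrder 𝕜] [IsStrictOrderedRing 𝕜]
  [AddCommGroup V] [Module 𝕜 V] {C : Set V}

theorem Convex.exists_nonneg_smul_of_mem_span_sub (hC : Convex 𝕜 C) (hne : C.Nonempty) {p : V}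
    (hp : p ∈ span 𝕜 (C - C)) : ∃ t : 𝕜, 0 ≤ t ∧ p ∈ t • (C - C) := by
  have hD : Convex 𝕜 (C - C) := hC.sub hC
  induction hp using span_induction with
  | mem p hp => exact ⟨1, zero_le_one, by rwa [one_smul]⟩
  | zero => exact ⟨0, le_rfl, by rw [zero_smul_set (hne.sub hne)]; rfl⟩
  | add p q _ _ hp hq =>
    obtain ⟨t, ht, hpt⟩ := hp
    obtain ⟨s, hs, hqs⟩ := hq
    exact ⟨t + s, add_nonneg ht hs, hD.add_smul ht hs ▸ add_mem_add hpt hqs⟩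
  | smul c p _ hp =>
    obtain ⟨t, ht, hpt⟩ := hp
    rcases le_total 0 c with hc | hc
    · exact ⟨c * t, mul_nonneg hc ht, by rw [mul_smul]; exact smul_mem_smul_set hpt⟩
    · refine ⟨-c * t, mul_nonneg (neg_nonneg.2 hc) ht, ?_⟩
      have hnp : -p ∈ t • (C - C) := by
        rw [← neg_sub C C, smul_set_neg]
        exact Set.neg_mem_neg.2 hpt
      simpa [mul_smul] using smul_mem_smul_set (a := -c) hnp

end Cone

section AffineOn

variable (𝕜 : Type*) {E F : Type*} [Semiring 𝕜] [PartialOrder 𝕜]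
  [AddCommMonoid E] [Module 𝕜 E] [AddCommMonoid F] [Module 𝕜 F]

def AffineOn (X : Set E) (f : E → F) : Prop :=
  ∀ a b : 𝕜, 0 ≤ a → 0 ≤ b → a + b = 1 → ∀ x ∈ X, ∀ y ∈ X, f (a • x + b • y) = a • f x + b • f y

variable {𝕜} {X : Set E} {f : E → F}

theorem AffineOn.convex_image (hX : Convex 𝕜 X) (hf : AffineOn 𝕜 X f) : Convex 𝕜 (f '' X) := by
  rintro - ⟨x, hx, rfl⟩ - ⟨y, hy, rfl⟩ a b ha hb hab
  exact ⟨a • x + b • y, hX hx hy ha hb hab, hf a b ha hb hab x hx y hy⟩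

theorem AffineOn.convex_graph (hX : Convex 𝕜 X) (hf : AffineOn 𝕜 X f) :
    Convex 𝕜 ((fun x ↦ (x, f x)) '' X) := by
  rintro - ⟨x, hx, rfl⟩ - ⟨y, hy, rfl⟩ a b ha hb hab
  exact ⟨a • x + b • y, hX hx hy ha hb hab, by simp [hf a b ha hb hab x hx y hy]⟩

end AffineOn

section LinearExtension

variable {𝕜 E F : Type*} [Field 𝕜] [LinearOrder 𝕜] [IsStrictOrderedRing 𝕜]
  [AddCommGroup E] [Module 𝕜 E] [AddCommGroup F] [Module 𝕜 F] {X : Set E} {f : E → F}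

theorem AffineOn.snd_eq_zero_of_mem_span (hX : Convex 𝕜 X) (hf : AffineOn 𝕜 X f) {p : E × F}
    (hp : p ∈ span 𝕜 ((fun x ↦ (x, f x)) '' X - (fun x ↦ (x, f x)) '' X)) (hp₁ : p.1 = 0) :
    p.2 = 0 := by
  rcases X.eq_empty_or_nonempty with rfl | hne
  · simp_all
  obtain ⟨t, -, hpt⟩ := (hf.convex_graph hX).exists_nonneg_smul_of_mem_span_sub (hne.image _) hp
  obtain ⟨-, ⟨-, ⟨x, -, rfl⟩, -, ⟨y, -, rfl⟩, rfl⟩, rfl⟩ := hpt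
  have : t = 0 ∨ x = y := by simpa [sub_eq_zero] using hp₁
  rcases this with rfl | rfl <;> simp

theorem AffineOn.exists_linearMap (hX : Convex 𝕜 X) (hf : AffineOn 𝕜 X f) :
    ∃ L : E →ₗ[𝕜] F, ∀ x ∈ X, ∀ y ∈ X, f x - f y = L (x - y) := by
  set W := span 𝕜 ((fun x ↦ (x, f x)) '' X - (fun x ↦ (x, f x)) '' X)
  have hW : ∀ p ∈ W, p.1 = 0 → p.2 = 0 := fun p hp hp₁ ↦ hf.snd_eq_zero_of_mem_span hX hp hp₁
  obtain ⟨L, hL⟩ := W.toLinearPMap.toFun.exists_extend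
  refine ⟨L, fun x hx y hy ↦ ?_⟩
  have hxy : (x - y, f x - f y) ∈ W.toLinearPMap.graph := by
    rw [W.toLinearPMap_graph_eq hW]
    exact subset_span (sub_mem_sub (mem_image_of_mem _ hx) (mem_image_of_mem _ hy))
  obtain ⟨z, hz₁, hz₂⟩ := (LinearPMap.mem_graph_iff _).1 hxy
  rw [← show (z : E) = x - y from hz₁, ← show W.toLinearPMap z = f x - f y from hz₂]
  exact (LinearMap.congr_fun hL z).symm

end LinearExtension

section Topology

variable {E F : Type*} [NormedAddCommGroup E] [NormedSpace ℝ E] [FiniteDimensional ℝ E]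
  [AddCommGroup F] [Module ℝ F] [TopologicalSpace F] [IsTopologicalAddGroup F]
  [ContinuousSMul ℝ F] {X : Set E} {f : E → F}

theorem AffineOn.isCompact_image (hX : Convex ℝ X) (hXc : IsCompact X) (hf : AffineOn ℝ X f) :
    IsCompact (f '' X) := by
  rcases X.eq_empty_or_nonempty with rfl | ⟨x₀, hx₀⟩
  · simp
  obtain ⟨L, hL⟩ := hf.exists_linearMap hX
  have hfL : EqOn f (fun x ↦ f x₀ + L (x - x₀)) X := fun x hx ↦
    eq_add_of_sub_eq' (hL x hx x₀ hx₀)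
  rw [image_congr hfL]
  exact hXc.image (continuous_const.add
    (L.continuous_of_finiteDimensional.comp (continuous_sub_right x₀)))

end Topology

theorem halfspace_satisfiable_implies_response_satisfiable_general
    (n m d : ℕ) (X : Set (Fin n → ℝ)) (Y : Set (Fin m → ℝ))
    (hXc : Convex ℝ X) (hXcp : IsCompact X)
    (ℓ : (Fin n → ℝ) → (Fin m → ℝ) → (Fin d → ℝ))
    (hbi1 : ∀ a b : ℝ, 0 ≤ a → 0 ≤ b → a + b = 1 →
      ∀ x₁ ∈ X, ∀ x₂ ∈ X, ∀ y ∈ Y,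
        ℓ (a • x₁ + b • x₂) y = a • ℓ x₁ y + b • ℓ x₂ y)
    (S : Set (Fin d → ℝ)) (hScl : IsClosed S) (hSconv : Convex ℝ S)
    (hhalf : ∀ (θ : Fin d → ℝ) (c : ℝ), S ⊆ {z | ∑ i, θ i * z i ≤ c} →
      ∃ x ∈ X, ∀ y ∈ Y, ∑ i, θ i * ℓ x y i ≤ c) :
    ∀ y ∈ Y, ∃ x ∈ X, ℓ x y ∈ S := by
  intro y₀ hy₀
  by_contra! hS
  have hf : AffineOn ℝ X (ℓ · y₀) := fun a b ha hb hab x₁ hx₁ x₂ hx₂ ↦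
    hbi1 a b ha hb hab x₁ hx₁ x₂ hx₂ y₀ hy₀
  have hdisj : Disjoint S ((ℓ · y₀) '' X) := by
    rw [disjoint_left]
    rintro _ hz ⟨x, hx, rfl⟩
    exact hS x hx hz
  obtain ⟨φ, u, v, hSu, huv, hv⟩ := geometric_hahn_banach_closed_compact hSconv hScl
    (hf.convex_image hXc) (hf.isCompact_image hXc hXcp) hdisj
  set θ : Fin d → ℝ := fun i ↦ φ (Pi.single i 1)
  have hφ : ∀ z, φ z = ∑ i, θ i * z i := fun z ↦ by
    conv_lhs => rw [pi_eq_sum_univ' z]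
    simp [θ, mul_comm]
  obtain ⟨x, hx, hxu⟩ := hhalf θ u fun z hz ↦ by simpa [← hφ] using (hSu z hz).le
  have hvx := hv _ (mem_image_of_mem _ hx)
  linarith [hφ (ℓ x y₀), hxu y₀ hy₀]

theorem halfspace_satisfiable_implies_response_satisfiable
    (n m d : ℕ) (X : Set (Fin n → ℝ)) (Y : Set (Fin m → ℝ))
    (hXc : Convex ℝ X) (hXcp : IsCompact X) (hXne : X.Nonempty)
    (hYc : Convex ℝ Y) (hYcp : IsCompact Y) (hYne : Y.Nonempty)
    (ℓ : (Fin n → ℝ) → (Fin m → ℝ) → (Fin d → ℝ))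
    (hbi1 : ∀ a b : ℝ, 0 ≤ a → 0 ≤ b → a + b = 1 →
      ∀ x₁ ∈ X, ∀ x₂ ∈ X, ∀ y ∈ Y,
        ℓ (a • x₁ + b • x₂) y = a • ℓ x₁ y + b • ℓ x₂ y)
    (hbi2 : ∀ a b : ℝ, 0 ≤ a → 0 ≤ b → a + b = 1 →
      ∀ x ∈ X, ∀ y₁ ∈ Y, ∀ y₂ ∈ Y,
        ℓ x (a • y₁ + b • y₂) = a • ℓ x y₁ + b • ℓ x y₂)
    (S : Set (Fin d → ℝ)) (hScl : IsClosed S) (hSconv : Convex ℝ S)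
    (hhalf : ∀ (θ : Fin d → ℝ) (c : ℝ), S ⊆ {z | ∑ i, θ i * z i ≤ c} →
      ∃ x ∈ X, ∀ y ∈ Y, ∑ i, θ i * ℓ x y i ≤ c) :
    ∀ y ∈ Y, ∃ x ∈ X, ℓ x y ∈ S :=
  halfspace_satisfiable_implies_response_satisfiable_general n m d X Y hXc hXcp ℓ hbi1 S hScl hSconv
    hhalf
end

section
/- Reduction from regret to approachability: Let S ⊆ {1} × ℝ^{d−1} be nonempty compact convex, K = cone(S)° ∩ B₁ (unit ball), and suppose points z₁,...,z_T ∈ ℝ^d (payoffs ℓ(x_t, y_t)) and θ₁,...,θ_T ∈ K satisfy ⟨θ_t, z_t⟩ ≤ 0 for all t, and each z_t ∈ {1} × ℝ^{d−1}. Then dist((1/T)∑_t z_t, S) ≤ (1 + ‖S‖) · (1/T) · [∑_t ⟨−z_t, θ_t⟩ − min_{θ ∈ K} ∑_t ⟨−z_t, θ⟩]. -/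
/-!
Write `z̄ = T⁻¹ ∑ z_t`. The cone over `S` meets the hyperplane `{x₀ = 1}` exactly in `S`, and
rescaling a point `a • s` of the cone back onto that hyperplane moves it by
`|a - 1| ‖s‖ ≤ dist(z̄, a • s) ‖S‖`, so `dist(z̄, S) ≤ (1 + ‖S‖) dist(z̄, cone S)`.
By projecting `z̄` onto the closed convex cone, `dist(z̄, cone S) = ⟪z̄, p⟫` for some `p`
in the polar cone with `‖p‖ ≤ 1`, i.e. some `p ∈ K`. Finally `T ⟪z̄, p⟫ = -∑ ⟪-z_t, p⟫` is bounded by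
the regret against `K`, because the oracle condition makes `∑ ⟪-z_t, θ_t⟫` nonnegative.
-/

open Metric RealInnerProductSpace

namespace Set

variable {E : Type*} [AddCommGroup E] [Module ℝ E]

def cone (S : Set E) : Set E := {w | ∃ a : ℝ, 0 ≤ a ∧ ∃ s ∈ S, w = a • s}

theorem zero_mem_cone {S : Set E} (hS : S.Nonempty) : (0 : E) ∈ S.cone := by
  obtain ⟨s, hs⟩ := hS
  exact ⟨0, le_rfl, s, hs, (zero_smul ℝ s).symm⟩

theorem smul_mem_cone {S : Set E} {c : ℝ} (hc : 0 ≤ c) {w : E} (hw : w ∈ S.cone) :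
    c • w ∈ S.cone := by
  obtain ⟨a, ha, s, hs, rfl⟩ := hw
  exact ⟨c * a, mul_nonneg hc ha, s, hs, smul_smul c a s⟩

end Set

theorem Convex.cone {E : Type*} [AddCommGroup E] [Module ℝ E] {S : Set E} (hS : Convex ℝ S) :
    Convex ℝ S.cone := by
  rintro _ ⟨a, ha, s, hs, rfl⟩ _ ⟨b, hb, u, hu, rfl⟩ p q hp hq hpq
  rcases (add_nonneg (mul_nonneg hp ha) (mul_nonneg hq hb)).eq_or_lt with hc | hc
  · have hpa : p * a = 0 := by nlinarith [mul_nonneg hp ha, mul_nonneg hq hb]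
    have hqb : q * b = 0 := by nlinarith [mul_nonneg hp ha, mul_nonneg hq hb]
    refine ⟨0, le_rfl, s, hs, ?_⟩
    simp [smul_smul, hpa, hqb]
  · -- `p a s + q b u` is `p a + q b` times a convex combination of `s` and `u`
    refine ⟨p * a + q * b, hc.le, (p * a / (p * a + q * b)) • s + (q * b / (p * a + q * b)) • u,
      hS hs hu (by positivity) (by positivity) (by field_simp), ?_⟩
    rw [smul_add, smul_smul, smul_smul, smul_smul, smul_smul]
    congr 1 <;> congr 1 <;> field_simp

section Lifting

variable {E : Type*} [SeminormedAddCommGroup E] [NormedSpace ℝ E]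
  {φ : StrongDual ℝ E} (hφ : ‖φ‖ ≤ 1) {x : E} (hx : φ x = 1)
include hφ hx

theorem dist_le_one_add_norm_mul_dist_smul {s : E} (hs : φ s = 1) (a : ℝ) :
    dist x s ≤ (1 + ‖s‖) * dist x (a • s) := by
  have hscale : dist (a • s) s = |a - 1| * ‖s‖ := by
    rw [dist_eq_norm, ← Real.norm_eq_abs, ← norm_smul, sub_smul, one_smul]
  have ha : |a - 1| ≤ dist x (a • s) := by
    have h := φ.le_of_opNorm_le hφ (a • s - x)
    rwa [map_sub, map_smul, hs, hx, smul_eq_mul, mul_one, one_mul, Real.norm_eq_abs,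
      ← dist_eq_norm'] at h
  calc dist x s ≤ dist x (a • s) + dist (a • s) s := dist_triangle _ _ _
    _ ≤ dist x (a • s) + dist x (a • s) * ‖s‖ := by
        rw [hscale]; gcongr
    _ = (1 + ‖s‖) * dist x (a • s) := by ring

theorem infDist_le_one_add_mul_infDist_cone {S : Set E} (hS : S.Nonempty)
    (hS1 : ∀ s ∈ S, φ s = 1) {M : ℝ} (hM : ∀ s ∈ S, ‖s‖ ≤ M) :
    infDist x S ≤ (1 + M) * infDist x S.cone := by
  obtain ⟨s₀, hs₀⟩ := hS
  have hM1 : 0 < 1 + M := by linarith [norm_nonneg s₀, hM s₀ hs₀]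
  rw [← div_le_iff₀' hM1, le_infDist ⟨0, Set.zero_mem_cone ⟨s₀, hs₀⟩⟩]
  rintro _ ⟨a, -, s, hs, rfl⟩
  rw [div_le_iff₀' hM1]
  calc infDist x S ≤ dist x s := infDist_le_dist_of_mem hs
    _ ≤ (1 + ‖s‖) * dist x (a • s) := dist_le_one_add_norm_mul_dist_smul hφ hx (hS1 s hs) a
    _ ≤ (1 + M) * dist x (a • s) := by gcongr; exact hM s hs

end Lifting

section Polar

variable {E : Type*} [NormedAddCommGroup E] [InnerProductSpace ℝ E] [CompleteSpace E]

theorem exists_mem_polar_infDist_le_inner {C : Set E} (hC : Convex ℝ C) (h0 : (0 : E) ∈ C)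
    (hsmul : ∀ c : ℝ, 0 ≤ c → ∀ w ∈ C, c • w ∈ C) (x : E) :
    ∃ p : E, (∀ w ∈ C, ⟪p, w⟫ ≤ 0) ∧ ‖p‖ ≤ 1 ∧ infDist x C ≤ ⟪x, p⟫ := by
  obtain ⟨c, hc, hmin⟩ := exists_norm_eq_iInf_of_complete_convex ⟨0, subset_closure h0⟩
    isClosed_closure.isComplete hC.closure x
  have hproj := (norm_eq_iInf_iff_real_inner_le_zero hC.closure hc).1 hmin
  obtain ⟨v, rfl⟩ : ∃ v, x = v + c := ⟨x - c, (sub_add_cancel x c).symm⟩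
  rw [add_sub_cancel_right] at hproj
  -- testing the projection inequality against `0` and `2 • c` forces `v ⊥ c`
  have hvc : ⟪v, c⟫ = 0 := by
    have h2c : (2 : ℝ) • c ∈ closure C :=
      Set.MapsTo.closure (fun w hw => hsmul 2 zero_le_two w hw) (continuous_const_smul 2) hc
    have h₁ := hproj _ h2c
    have h₂ := hproj 0 (subset_closure h0)
    rw [two_smul, add_sub_cancel_right] at h₁
    rw [zero_sub, inner_neg_right] at h₂
    linarith
  have hpolar : ∀ w ∈ C, ⟪v, w⟫ ≤ 0 := fun w hw => by
    simpa [inner_sub_right, hvc] using hproj w (subset_closure hw)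
  refine ⟨‖v‖⁻¹ • v, fun w hw => ?_, ?_, ?_⟩
  · rw [real_inner_smul_left]
    exact mul_nonpos_of_nonneg_of_nonpos (by positivity) (hpolar w hw)
  · rw [norm_smul, norm_inv, norm_norm]
    exact inv_mul_le_one_of_le₀ le_rfl (norm_nonneg v)
  · have hxv : ⟪v + c, v⟫ = ‖v‖ * ‖v‖ := by
      rw [inner_add_left, real_inner_comm v c, hvc, add_zero, real_inner_self_eq_norm_mul_norm]
    calc infDist (v + c) C = infDist (v + c) (closure C) := infDist_closure.symm
      _ ≤ ‖v‖ := by simpa [dist_eq_norm] using infDist_le_dist_of_mem (x := v + c) hc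
      _ = ⟪v + c, ‖v‖⁻¹ • v⟫ := by rw [real_inner_smul_right, hxv, ← mul_assoc, inv_mul_mul_self]

end Polar

theorem sum_inner_le_sum_inner_sub_sInf {ι E : Type*} [Fintype ι] [NormedAddCommGroup E]
    [InnerProductSpace ℝ E] {K : Set E} (hK : K ⊆ closedBall 0 1) (z θ : ι → E)
    (horacle : ∀ t, ⟪θ t, z t⟫ ≤ 0) {p : E} (hp : p ∈ K) :
    ∑ t, ⟪z t, p⟫ ≤ ∑ t, ⟪-z t, θ t⟫ - sInf {r : ℝ | ∃ q ∈ K, r = ∑ t, ⟪-z t, q⟫} := by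
  have hbdd : BddBelow {r : ℝ | ∃ q ∈ K, r = ∑ t, ⟪-z t, q⟫} := by
    refine ⟨-∑ t, ‖z t‖, ?_⟩
    rintro _ ⟨q, hq, rfl⟩
    rw [← Finset.sum_neg_distrib]
    refine Finset.sum_le_sum fun t _ => ?_
    have hq1 : ‖q‖ ≤ 1 := by simpa using hK hq
    calc -‖z t‖ ≤ -(‖-z t‖ * ‖q‖) := by
          rw [norm_neg]; exact neg_le_neg (mul_le_of_le_one_right (norm_nonneg _) hq1)
      _ ≤ ⟪-z t, q⟫ := neg_le_of_abs_le (abs_real_inner_le_norm _ _)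
  have hregret : 0 ≤ ∑ t, ⟪-z t, θ t⟫ := Finset.sum_nonneg fun t _ => by
    rw [inner_neg_left, real_inner_comm, neg_nonneg]; exact horacle t
  have hinf := csInf_le hbdd ⟨p, hp, rfl⟩
  simp only [inner_neg_left, Finset.sum_neg_distrib] at hinf hregret ⊢
  linarith

theorem regret_to_approachability_general
    (d T : ℕ) (hT : 0 < T)
    (S : Set (EuclideanSpace ℝ (Fin (d + 1))))
    (hSconv : Convex ℝ S)
    (hS1 : ∀ s ∈ S, s 0 = 1)
    (M : ℝ) (hM : IsGreatest ((fun s => ‖s‖) '' S) M)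
    (coneS : Set (EuclideanSpace ℝ (Fin (d + 1))))
    (hconeS : coneS = {w | ∃ a : ℝ, 0 ≤ a ∧ ∃ s ∈ S, w = a • s})
    (K : Set (EuclideanSpace ℝ (Fin (d + 1))))
    (hK : K = {θ | ∀ w ∈ coneS, (inner ℝ θ w : ℝ) ≤ 0} ∩ Metric.closedBall 0 1)
    (z : Fin T → EuclideanSpace ℝ (Fin (d + 1))) (hz1 : ∀ t, z t 0 = 1)
    (θ : Fin T → EuclideanSpace ℝ (Fin (d + 1)))
    (horacle : ∀ t, (inner ℝ (θ t) (z t) : ℝ) ≤ 0) :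
    Metric.infDist ((T : ℝ)⁻¹ • ∑ t, z t) S ≤
      (1 + M) * ((T : ℝ)⁻¹ *
        ((∑ t, (inner ℝ (-(z t)) (θ t) : ℝ)) -
          sInf {r : ℝ | ∃ p ∈ K, r = ∑ t, (inner ℝ (-(z t)) p : ℝ)})) := by
  change coneS = S.cone at hconeS
  subst hconeS
  obtain ⟨⟨s₀, hs₀, -⟩, hMub⟩ := hM
  have hproj : ‖EuclideanSpace.proj (0 : Fin (d + 1)) (𝕜 := ℝ)‖ ≤ 1 :=
    ContinuousLinearMap.opNorm_le_bound _ zero_le_one fun x => by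
      simpa using PiLp.norm_apply_le x 0
  have hmean : EuclideanSpace.proj (0 : Fin (d + 1)) ((T : ℝ)⁻¹ • ∑ t, z t) = 1 := by
    simp [hz1, hT.ne']
  have hlift := infDist_le_one_add_mul_infDist_cone hproj hmean ⟨s₀, hs₀⟩ hS1
    (fun s hs => hMub ⟨s, hs, rfl⟩)
  obtain ⟨p, hpolar, hp1, hdist⟩ := exists_mem_polar_infDist_le_inner hSconv.cone
    (Set.zero_mem_cone ⟨s₀, hs₀⟩) (fun c hc w hw => Set.smul_mem_cone hc hw)
    ((T : ℝ)⁻¹ • ∑ t, z t)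
  have hpK : p ∈ K := hK ▸ ⟨hpolar, mem_closedBall_zero_iff.2 hp1⟩
  have hregret := sum_inner_le_sum_inner_sub_sInf (hK ▸ Set.inter_subset_right) z θ horacle hpK
  have hM0 : 0 ≤ 1 + M := by linarith [norm_nonneg s₀, hMub ⟨s₀, hs₀, rfl⟩]
  calc _ ≤ (1 + M) * infDist ((T : ℝ)⁻¹ • ∑ t, z t) S.cone := hlift
    _ ≤ (1 + M) * ((T : ℝ)⁻¹ * ∑ t, ⟪z t, p⟫) := by
        rw [real_inner_smul_left, sum_inner] at hdist; gcongr
    _ ≤ _ := by gcongr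

theorem regret_to_approachability
    (d T : ℕ) (hT : 0 < T)
    (S : Set (EuclideanSpace ℝ (Fin (d + 1)))) (hSne : S.Nonempty)
    (hScp : IsCompact S) (hSconv : Convex ℝ S)
    (hS1 : ∀ s ∈ S, s 0 = 1)
    (M : ℝ) (hM : IsGreatest ((fun s => ‖s‖) '' S) M)
    (coneS : Set (EuclideanSpace ℝ (Fin (d + 1))))
    (hconeS : coneS = {w | ∃ a : ℝ, 0 ≤ a ∧ ∃ s ∈ S, w = a • s})
    (K : Set (EuclideanSpace ℝ (Fin (d + 1))))
    (hK : K = {θ | ∀ w ∈ coneS, (inner ℝ θ w : ℝ) ≤ 0} ∩ Metric.closedBall 0 1)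
    (z : Fin T → EuclideanSpace ℝ (Fin (d + 1))) (hz1 : ∀ t, z t 0 = 1)
    (θ : Fin T → EuclideanSpace ℝ (Fin (d + 1))) (hθ : ∀ t, θ t ∈ K)
    (horacle : ∀ t, (inner ℝ (θ t) (z t) : ℝ) ≤ 0) :
    Metric.infDist ((T : ℝ)⁻¹ • ∑ t, z t) S ≤
      (1 + M) * ((T : ℝ)⁻¹ *
        ((∑ t, (inner ℝ (-(z t)) (θ t) : ℝ)) -
          sInf {r : ℝ | ∃ p ∈ K, r = ∑ t, (inner ℝ (-(z t)) p : ℝ)})) :=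
  regret_to_approachability_general d T hT S hSconv hS1 M hM coneS hconeS K hK z hz1 θ horacle
end

section
/- Calibration oracle correctness (interior case): Let m ≥ 1, ε = 1/m, and θ ∈ ℝ^{m+1} with ‖θ‖_∞ ≤ 1. Suppose 0 ≤ i < m with θ(i) > 0 and θ(i+1) < 0. Define w ∈ Δ_{m+1} supported on coordinates i and i+1 with w(i) = θ(i)^{-1}/(θ(i)^{-1} − θ(i+1)^{-1}) and w(i+1) = −θ(i+1)^{-1}/(θ(i)^{-1} − θ(i+1)^{-1}). Then for every y ∈ [0,1], ∑_{k=0}^{m} θ(k)·w(k)·(y − k/m) = (1/m)·1/(θ(i)^{-1} − θ(i+1)^{-1}) ≤ ε/2. -/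
/-! On the two coordinates `i, i + 1` the products `θ k * w k` are `±1 / D` with
`D = θ(i)⁻¹ - θ(i+1)⁻¹`, so the `y`-terms cancel and only the grid spacing `1 / m` survives.
Since `θ(i)⁻¹ ≥ 1` and `-θ(i+1)⁻¹ ≥ 1`, `D ≥ 2`. -/

lemma mul_two_point_weights_add {a b : ℝ} (ha : a ≠ 0) (hb : b ≠ 0) (y s t : ℝ) :
    a * (a⁻¹ / (a⁻¹ - b⁻¹)) * (y - s) + b * (-b⁻¹ / (a⁻¹ - b⁻¹)) * (y - t) =
      (t - s) * (1 / (a⁻¹ - b⁻¹)) := by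
  rw [mul_div_assoc', mul_inv_cancel₀ ha, mul_div_assoc', mul_neg, mul_inv_cancel₀ hb]
  ring

lemma one_div_inv_add_inv_le_div_two {a b c : ℝ} (ha : 0 < a) (hb : 0 < b) (hac : a ≤ c)
    (hbc : b ≤ c) : 1 / (a⁻¹ + b⁻¹) ≤ c / 2 := by
  have hca : 1 ≤ c * a⁻¹ := by rw [← div_eq_mul_inv]; exact (one_le_div ha).2 hac
  have hcb : 1 ≤ c * b⁻¹ := by rw [← div_eq_mul_inv]; exact (one_le_div hb).2 hbc
  rw [div_le_div_iff₀ (by positivity) two_pos]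
  linarith

theorem calibration_oracle_interior_general
    (m : ℕ) (ε : ℝ) (hε : ε = 1 / m)
    (θ : ℕ → ℝ) (hθ : ∀ k ≤ m, |θ k| ≤ 1)
    (i : ℕ) (hi : i < m) (hpos : 0 < θ i) (hneg : θ (i + 1) < 0)
    (w : ℕ → ℝ)
    (hw : w = fun k => if k = i then (θ i)⁻¹ / ((θ i)⁻¹ - (θ (i + 1))⁻¹)
      else if k = i + 1 then -(θ (i + 1))⁻¹ / ((θ i)⁻¹ - (θ (i + 1))⁻¹) else 0) :
    ∀ y ∈ Set.Icc (0 : ℝ) 1,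
      (∑ k ∈ Finset.range (m + 1), θ k * w k * (y - k / m)) =
        (1 / m) * (1 / ((θ i)⁻¹ - (θ (i + 1))⁻¹)) ∧
      (∑ k ∈ Finset.range (m + 1), θ k * w k * (y - k / m)) ≤ ε / 2 := by
  intro y _
  have hsum : (∑ k ∈ Finset.range (m + 1), θ k * w k * (y - k / m)) =
      (1 / m) * (1 / ((θ i)⁻¹ - (θ (i + 1))⁻¹)) := by
    rw [Finset.sum_eq_add i (i + 1) (by omega) (fun k _ hk => by simp [hw, hk.1, hk.2])
      (by simp only [Finset.mem_range]; omega) (by simp only [Finset.mem_range]; omega)]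
    simp only [hw, if_pos rfl, if_neg (Nat.succ_ne_self i), if_true]
    rw [mul_two_point_weights_add hpos.ne' hneg.ne]
    push_cast
    ring
  refine ⟨hsum, ?_⟩
  have hD : 1 / ((θ i)⁻¹ - (θ (i + 1))⁻¹) ≤ 1 / 2 := by
    rw [sub_eq_add_neg, ← inv_neg]
    exact one_div_inv_add_inv_le_div_two hpos (neg_pos.2 hneg) (abs_le.1 (hθ i hi.le)).2
      (neg_le.1 (abs_le.1 (hθ (i + 1) hi)).1)
  rw [hsum, hε, div_eq_mul_one_div _ 2]
  gcongr

theorem calibration_oracle_interior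
    (m : ℕ) (hm : 1 ≤ m) (ε : ℝ) (hε : ε = 1 / m)
    (θ : ℕ → ℝ) (hθ : ∀ k ≤ m, |θ k| ≤ 1)
    (i : ℕ) (hi : i < m) (hpos : 0 < θ i) (hneg : θ (i + 1) < 0)
    (w : ℕ → ℝ)
    (hw : w = fun k => if k = i then (θ i)⁻¹ / ((θ i)⁻¹ - (θ (i + 1))⁻¹)
      else if k = i + 1 then -(θ (i + 1))⁻¹ / ((θ i)⁻¹ - (θ (i + 1))⁻¹) else 0) :
    ∀ y ∈ Set.Icc (0 : ℝ) 1,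
      (∑ k ∈ Finset.range (m + 1), θ k * w k * (y - k / m)) =
        (1 / m) * (1 / ((θ i)⁻¹ - (θ (i + 1))⁻¹)) ∧
      (∑ k ∈ Finset.range (m + 1), θ k * w k * (y - k / m)) ≤ ε / 2 :=
  calibration_oracle_interior_general m ε hε θ hθ i hi hpos hneg w hw
end
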